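/- There do not exist three distinct points p, q, r ∈ ℂ × ℝ, each lying on the unit Korányi sphere (|z|⁴ + t² = 1) and at Korányi distance 1 from (1, 0), such that d(p,q) = d(q,r) = d(p,r) = 1. -/

import Mathlib

/-!
Write `A = |z|² + i t` for `p = (z, t)`, so that the unit Korányi sphere is `|A| = 1`. Expanding
`kd⁴` shows that `kd (p, q)⁴ = B (φ p, φ q) + |A_p|² + |A_q|² - 1` for a lift `φ : ℂ × ℝ → ℝ⁷` and a
diagonal bilinear form `B` of signature `(4, 3)`. For points of the unit sphere at mutual distance
`1` the lifts are therefore pairwise `B`-orthogonal with `B (φ p, φ p) = -1`. Such vectors stay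
linearly independent after projecting onto the three negative directions of `B` (a combination
killed by the projection has `B ≥ 0`, yet `B = -∑ cᵢ²`), so there are at most three of them; but
`(1, 0), p, q, r` would be four.
-/

open Complex Real

/-- The Korányi (Heisenberg) distance on ℂ × ℝ. -/
noncomputable def kd (p q : ℂ × ℝ) : ℝ :=
  ((‖p.1 - q.1‖) ^ 4 +
    (p.2 - q.2 + 2 * (p.1 * (starRingEnd ℂ) q.1).im) ^ 2) ^ ((1 : ℝ) / 4)

namespace LinearMap.BilinForm

variable {V W ι : Type*} [AddCommGroup V] [Module ℝ V] [AddCommGroup W] [Module ℝ W]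
  [FiniteDimensional ℝ W] [Fintype ι]

theorem card_le_finrank_of_pairwise_orthogonal_of_neg (B : LinearMap.BilinForm ℝ V) (N : V →ₗ[ℝ] W)
    (hpos : ∀ v, N v = 0 → 0 ≤ B v v) (v : ι → V)
    (horth : Pairwise fun i j => B (v i) (v j) = 0) (hneg : ∀ i, B (v i) (v i) < 0) :
    Fintype.card ι ≤ Module.finrank ℝ W := by
  refine LinearIndependent.fintype_card_le_finrank (b := N ∘ v) ?_
  rw [Fintype.linearIndependent_iff]
  intro c hc i
  set s := ∑ j, c j • v j
  have hs : B s s = ∑ j, c j ^ 2 * B (v j) (v j) := by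
    simp only [s, map_sum, map_smul, LinearMap.sum_apply, LinearMap.smul_apply, smul_eq_mul]
    refine Finset.sum_congr rfl fun j _ => ?_
    rw [Finset.sum_eq_single j (fun k _ hkj => by rw [horth hkj, mul_zero]) (by simp)]
    ring
  have hNs : N s = 0 := by simpa [s, map_sum] using hc
  by_contra hci
  have hs_neg : B s s < 0 := by
    rw [hs]
    exact Finset.sum_neg' (fun j _ => mul_nonpos_of_nonneg_of_nonpos (sq_nonneg _) (hneg j).le)
      ⟨i, Finset.mem_univ _, mul_neg_of_pos_of_neg (by positivity) (hneg i)⟩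
  exact hs_neg.not_ge (hpos s hNs)

end LinearMap.BilinForm

theorem kd_pow_four (p q : ℂ × ℝ) :
    kd p q ^ 4 = ‖p.1 - q.1‖ ^ 4 + (p.2 - q.2 + 2 * (p.1 * starRingEnd ℂ q.1).im) ^ 2 := by
  rw [kd, one_div]
  exact_mod_cast Real.rpow_inv_natCast_pow (n := 4) (by positivity) (by norm_num)

theorem kd_self (p : ℂ × ℝ) : kd p p = 0 := by
  simp [kd, mul_conj]

theorem kd_comm (p q : ℂ × ℝ) : kd p q = kd q p := by
  rw [kd, kd, norm_sub_rev]
  congr 2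
  rw [← neg_sq]
  congr 1
  simp only [mul_im, conj_re, conj_im]
  ring

noncomputable def koranyiForm : LinearMap.BilinForm ℝ (Fin 7 → ℝ) :=
  Matrix.toBilin' (Matrix.diagonal ![1, 6, 2, 2, -2, -2, -2])

def koranyiNegativePart : (Fin 7 → ℝ) →ₗ[ℝ] (Fin 3 → ℝ) :=
  LinearMap.pi fun i => LinearMap.proj (Fin.natAdd 4 i)

theorem koranyiForm_apply (u v : Fin 7 → ℝ) :
    koranyiForm u v = u 0 * v 0 + 6 * u 1 * v 1 + 2 * u 2 * v 2 + 2 * u 3 * v 3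
      - 2 * u 4 * v 4 - 2 * u 5 * v 5 - 2 * u 6 * v 6 := by
  simp only [koranyiForm, Matrix.toBilin'_apply', dotProduct, Matrix.mulVec_diagonal,
    Fin.sum_univ_seven, Matrix.cons_val]
  ring

theorem koranyiForm_nonneg_of_negativePart_eq_zero {v : Fin 7 → ℝ}
    (hv : koranyiNegativePart v = 0) : 0 ≤ koranyiForm v v := by
  have h4 : v 4 = 0 := congrFun hv 0
  have h5 : v 5 = 0 := congrFun hv 1
  have h6 : v 6 = 0 := congrFun hv 2
  rw [koranyiForm_apply, h4, h5, h6]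
  nlinarith [sq_nonneg (v 0), sq_nonneg (v 1), sq_nonneg (v 2), sq_nonneg (v 3)]

/-- Cygan's identity `kd (p, q)² = |A_p + conj A_q - 2 conj z_p z_q|`, with `A = |z|² + i t`, makes
`kd⁴` a quadratic expression in the coordinates `(1, |z|², z - z A, t, z + z A)`. -/
noncomputable def koranyiLift (p : ℂ × ℝ) : Fin 7 → ℝ :=
  let zA := p.1 * (normSq p.1 + p.2 * I)
  ![1, normSq p.1, p.1.re - zA.re, p.1.im - zA.im, p.2, p.1.re + zA.re, p.1.im + zA.im]

theorem koranyiForm_lift_lift (p q : ℂ × ℝ) :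
    koranyiForm (koranyiLift p) (koranyiLift q) =
      kd p q ^ 4 + 1 - (‖p.1‖ ^ 4 + p.2 ^ 2) - (‖q.1‖ ^ 4 + q.2 ^ 2) := by
  have norm_pow_four (z : ℂ) : ‖z‖ ^ 4 = normSq z ^ 2 := by
    rw [normSq_eq_norm_sq]; ring
  rw [kd_pow_four, norm_pow_four, norm_pow_four, norm_pow_four, koranyiForm_apply]
  simp only [koranyiLift, Matrix.cons_val, normSq_apply, mul_re, mul_im, add_re, add_im, sub_re,
    sub_im, ofReal_re, ofReal_im, I_re, I_im, conj_re, conj_im]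
  ring

theorem card_le_three_of_pairwise_kd_eq_one {ι : Type*} [Fintype ι] (p : ι → ℂ × ℝ)
    (hsphere : ∀ i, ‖(p i).1‖ ^ 4 + (p i).2 ^ 2 = 1)
    (hdist : Pairwise fun i j => kd (p i) (p j) = 1) : Fintype.card ι ≤ 3 := by
  have h := LinearMap.BilinForm.card_le_finrank_of_pairwise_orthogonal_of_neg koranyiForm
    koranyiNegativePart (fun _ => koranyiForm_nonneg_of_negativePart_eq_zero) (koranyiLift ∘ p)
    (fun i j hij => by simp [koranyiForm_lift_lift, hdist hij, hsphere])
    (fun i => by simp [koranyiForm_lift_lift, hsphere, kd_self])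
  simpa using h

theorem no_three_equilateral_on_curve :
    ¬ ∃ p q r : ℂ × ℝ, p ≠ q ∧ p ≠ r ∧ q ≠ r ∧
      (‖p.1‖) ^ 4 + p.2 ^ 2 = 1 ∧ kd p ((1 : ℂ), (0 : ℝ)) = 1 ∧
      (‖q.1‖) ^ 4 + q.2 ^ 2 = 1 ∧ kd q ((1 : ℂ), (0 : ℝ)) = 1 ∧
      (‖r.1‖) ^ 4 + r.2 ^ 2 = 1 ∧ kd r ((1 : ℂ), (0 : ℝ)) = 1 ∧
      kd p q = 1 ∧ kd q r = 1 ∧ kd p r = 1 := by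
  rintro ⟨p, q, r, -, -, -, hp, hpg, hq, hqg, hr, hrg, hpq, hqr, hpr⟩
  have h := card_le_three_of_pairwise_kd_eq_one ![((1 : ℂ), (0 : ℝ)), p, q, r]
    (fun i => by fin_cases i <;> simp [hp, hq, hr])
    (fun i j hij => by fin_cases i <;> fin_cases j <;> simp_all [kd_comm])
  simp at h
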